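/- For the three-state LTS S1 with states {−1, 0, 1}, actions {0, 1}, and transitions {(−1,0,0), (−1,0,−1), (−1,1,−1), (0,0,0), (0,1,0), (0,1,1), (0,1,−1), (1,0,0), (1,0,1), (1,1,1)}, the control problem (S1, {−1,0,1}, {0}) has no strong solution, but the controller K(s,a) = (s ≠ 0 → a = 0) is a weak solution to it. -/

import Mathlib

open scoped Classical


/-- A fullpath of a transition relation `R`: a run that is either infinite
(`len = ⊤`) or ends in a state with no successors. States are indexed `0..len`. -/
structure FullPath {S : Type*} {A : Type*} (R : S → A → S → Prop) where
  len : ℕ∞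
  st : ℕ → S
  ac : ℕ → A
  step : ∀ t : ℕ, (t : ℕ∞) < len → R (st t) (ac t) (st (t + 1))
  maximal : ∀ t : ℕ, (t : ℕ∞) = len → ∀ a s', ¬ R (st t) a s'

/-- `J(S,G,π)`: distance along `π` of its first state to the goal `G`
(`min {n > 0 | π(n) ∈ G}`, `⊤` if no such `n`). -/
noncomputable def pathJ {S A : Type*} {R : S → A → S → Prop} (G : Set S)
    (π : FullPath R) : ℕ∞ :=
  sInf {n : ℕ∞ | ∃ m : ℕ, n = (m : ℕ∞) ∧ 0 < m ∧ (m : ℕ∞) ≤ π.len ∧ π.st m ∈ G}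

/-- `π` is a fullpath starting in state `s` with action `a`. -/
def PathStarts {S A : Type*} {R : S → A → S → Prop} (π : FullPath R) (s : S) (a : A) : Prop :=
  π.st 0 = s ∧ π.ac 0 = a ∧ 0 < π.len

/-- Worst case distance of `s` from the goal region `G` (pessimistic view). -/
noncomputable def Jstrong {S A : Type*} (R : S → A → S → Prop) (G : Set S) (s : S) : ℕ∞ :=
  ⨆ (a : A) (_ : ∃ s', R s a s') (π : FullPath R) (_ : PathStarts π s a), pathJ G π

/-- Best case distance of `s` from the goal region `G` (optimistic view). -/
noncomputable def Jweak {S A : Type*} (R : S → A → S → Prop) (G : Set S) (s : S) : ℕ∞ :=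
  ⨆ (a : A) (_ : ∃ s', R s a s'), ⨅ (π : FullPath R) (_ : PathStarts π s a), pathJ G π

/-- A controller only enables admissible actions. -/
def IsController {S A : Type*} (R : S → A → S → Prop) (K : S → A → Prop) : Prop :=
  ∀ s a, K s a → ∃ s', R s a s'

/-- The set of states on which a controller enables some action. -/
def CtrlDom {S A : Type*} (K : S → A → Prop) : Set S := {s | ∃ a, K s a}

/-- The closed loop transition relation `T⁽ᴷ⁾(s,a,s') = T(s,a,s') ∧ K(s,a)`. -/
def closedLoop {S A : Type*} (R : S → A → S → Prop) (K : S → A → Prop) :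
    S → A → S → Prop :=
  fun s a s' => R s a s' ∧ K s a

/-- `K` is a strong solution to the LTS control problem `(R, I, G)`. -/
def StrongSolution {S A : Type*} (R : S → A → S → Prop) (I G : Set S)
    (K : S → A → Prop) : Prop :=
  IsController R K ∧ I ⊆ CtrlDom K ∧ ∀ s ∈ CtrlDom K, Jstrong (closedLoop R K) G s < ⊤

/-- `K` is a weak solution to the LTS control problem `(R, I, G)`. -/
def WeakSolution {S A : Type*} (R : S → A → S → Prop) (I G : Set S)
    (K : S → A → Prop) : Prop :=
  IsController R K ∧ I ⊆ CtrlDom K ∧ ∀ s ∈ CtrlDom K, Jweak (closedLoop R K) G s < ⊤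

def OptimalStrong {S A : Type*} (R : S → A → S → Prop) (I G : Set S)
    (K : S → A → Prop) : Prop :=
  StrongSolution R I G K ∧
    ∀ K', StrongSolution R I G K' →
      ∀ s, Jstrong (closedLoop R K) G s ≤ Jstrong (closedLoop R K') G s

/-- Most general optimal strong solution. -/
def StrongMgo {S A : Type*} (R : S → A → S → Prop) (I G : Set S)
    (K : S → A → Prop) : Prop :=
  OptimalStrong R I G K ∧ ∀ K', OptimalStrong R I G K' → ∀ s a, K' s a → K s a

def OptimalWeak {S A : Type*} (R : S → A → S → Prop) (I G : Set S)
    (K : S → A → Prop) : Prop :=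
  WeakSolution R I G K ∧
    ∀ K', WeakSolution R I G K' →
      ∀ s, Jweak (closedLoop R K) G s ≤ Jweak (closedLoop R K') G s

/-- Most general optimal weak solution. -/
def WeakMgo {S A : Type*} (R : S → A → S → Prop) (I G : Set S)
    (K : S → A → Prop) : Prop :=
  OptimalWeak R I G K ∧ ∀ K', OptimalWeak R I G K' → ∀ s a, K' s a → K s a

/-- The states of the LTS `S1`. -/
def St := {s : ℤ // s = -1 ∨ s = 0 ∨ s = 1}

/-- The transition relation of the LTS `S1` (action `0` is `false`,
action `1` is `true`). -/
def T1 : St → Bool → St → Prop :=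
  fun s a s' => (s.val, a, s'.val) ∈
    ({(-1, false, 0), (-1, false, -1), (-1, true, -1),
      (0, false, 0), (0, true, 0), (0, true, 1), (0, true, -1),
      (1, false, 0), (1, false, 1), (1, true, 1)} : Set (ℤ × Bool × ℤ))

/-! A state outside the goal in which every action is a self-loop traps any strong controller,
since the constant run there never reaches the goal; state `1` of `S1` is such a trap. The weak
controller instead always admits a step into `0`, where `(0, 0, 0)` loops, so from every state
some run hits the goal after one step. -/

namespace FullPath

variable {S A : Type*} {R : S → A → S → Prop}

def loop {s : S} {a : A} (h : R s a s) : FullPath R where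
  len := ⊤
  st _ := s
  ac _ := a
  step _ _ := h
  maximal t ht := absurd ht (ENat.natCast_ne_top t)

def stepThenLoop {s g : S} {a b : A} (hs : R s a g) (hg : R g b g) : FullPath R where
  len := ⊤
  st
    | 0 => s
    | _ + 1 => g
  ac
    | 0 => a
    | _ + 1 => b
  step
    | 0, _ => hs
    | _ + 1, _ => hg
  maximal t ht := absurd ht (ENat.natCast_ne_top t)

end FullPath

section Distances

variable {S A : Type*} {R : S → A → S → Prop} {G : Set S}

theorem pathJ_eq_top_of_forall_notMem {π : FullPath R} (h : ∀ t, π.st t ∉ G) :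
    pathJ G π = ⊤ := by
  rw [pathJ, sInf_eq_top]
  rintro _ ⟨m, rfl, -, -, hm⟩
  exact absurd hm (h m)

theorem pathJ_le_of_mem {π : FullPath R} {m : ℕ} (hm : 0 < m) (hlen : (m : ℕ∞) ≤ π.len)
    (hG : π.st m ∈ G) : pathJ G π ≤ m :=
  sInf_le ⟨m, rfl, hm, hlen, hG⟩

theorem pathJ_le_Jstrong {π : FullPath R} {s : S} {a : A} (hπ : PathStarts π s a) :
    pathJ G π ≤ Jstrong R G s := by
  obtain ⟨hs, ha, hlen⟩ := hπ
  have hR : R s a (π.st 1) := by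
    simpa [hs, ha] using π.step 0 (by simpa using hlen)
  exact le_iSup₂_of_le a ⟨_, hR⟩ (le_iSup₂_of_le π ⟨hs, ha, hlen⟩ le_rfl)

theorem Jstrong_eq_top_of_loop {s : S} {a : A} (hs : s ∉ G) (h : R s a s) :
    Jstrong R G s = ⊤ :=
  top_le_iff.mp <| (pathJ_eq_top_of_forall_notMem fun _ => hs).symm.le.trans
    (pathJ_le_Jstrong (π := FullPath.loop h) ⟨rfl, rfl, WithTop.top_pos⟩)

theorem Jweak_le_one {s g : S} {b : A} (hg : g ∈ G) (hloop : R g b g)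
    (hreach : ∀ a, (∃ s', R s a s') → R s a g) : Jweak R G s ≤ 1 := by
  refine iSup₂_le fun a ha => ?_
  let π := FullPath.stepThenLoop (hreach a ha) hloop
  refine iInf₂_le_of_le π ⟨rfl, rfl, WithTop.top_pos⟩ ?_
  exact_mod_cast pathJ_le_of_mem (π := π) one_pos le_top hg

end Distances

section Solutions

variable {S A : Type*} {R : S → A → S → Prop} {I G : Set S}

theorem not_strongSolution_of_forall_loop {s : S} (hsI : s ∈ I) (hsG : s ∉ G)
    (hloop : ∀ a, R s a s) (K : S → A → Prop) : ¬ StrongSolution R I G K := by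
  rintro ⟨-, hdom, hJ⟩
  obtain ⟨a, ha⟩ := hdom hsI
  exact (hJ s ⟨a, ha⟩).ne (Jstrong_eq_top_of_loop hsG ⟨hloop a, ha⟩)

theorem weakSolution_of_reach_goal_loop {K : S → A → Prop} {g : S} {b : A}
    (hI : I ⊆ CtrlDom K) (hg : g ∈ G) (hgR : R g b g) (hgK : K g b)
    (hreach : ∀ s a, K s a → R s a g) : WeakSolution R I G K := by
  refine ⟨fun s a ha => ⟨g, hreach s a ha⟩, hI, fun s _ => ?_⟩
  have hle : Jweak (closedLoop R K) G s ≤ 1 :=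
    Jweak_le_one hg ⟨hgR, hgK⟩ fun a ⟨_, _, ha⟩ => ⟨hreach s a ha, ha⟩
  exact hle.trans_lt ENat.one_lt_top

end Solutions

namespace St

def zero : St := ⟨0, by simp⟩

def one : St := ⟨1, by simp⟩

end St

theorem T1_one_loop (a : Bool) : T1 St.one a St.one := by
  cases a <;> simp [T1, St.one]

theorem T1_zero_loop : T1 St.zero false St.zero := by
  simp [T1, St.zero]

theorem T1_to_zero {s : St} {a : Bool} (h : s.val ≠ 0 → a = false) : T1 s a St.zero := by
  rcases s with ⟨v, rfl | rfl | rfl⟩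
  · simp [T1, St.zero, h (by decide)]
  · cases a <;> simp [T1, St.zero]
  · simp [T1, St.zero, h (by decide)]

/-- The control problem `(S1, {-1,0,1}, {0})` has no strong solution, but the
controller `K(s,a) = (s ≠ 0 → a = 0)` is a weak solution to it. -/
theorem S1_no_strong_but_weak :
    (¬ ∃ K : St → Bool → Prop,
        StrongSolution T1 Set.univ {s : St | s.val = 0} K) ∧
    WeakSolution T1 Set.univ {s : St | s.val = 0}
      (fun s a => s.val ≠ 0 → a = false) := by
  refine ⟨fun ⟨K, hK⟩ => ?_, ?_⟩
  · exact not_strongSolution_of_forall_loop (Set.mem_univ St.one) (show St.one.val ≠ 0 by decide)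
      T1_one_loop K hK
  · exact weakSolution_of_reach_goal_loop (fun s _ => ⟨false, fun _ => rfl⟩)
      (show St.zero.val = 0 from rfl) T1_zero_loop (fun _ => rfl) fun _ _ => T1_to_zero
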